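/- For all real numbers t and s with s ≠ 0, and for every inner product g on 𝔫_{t,s} that is compatible with J, the Hermitian structure (J,g) is strong KT if and only if t² = s². -/

import Mathlib

/-!
Every bracket of `𝔫_{t,s}` lies in the centre `⟨e₅, e₆⟩` (`e 4`, `e 5` below), which `J`
preserves. Hence `τ([a, b], c, d) = g([Jc, Jd], [a, b])`, and `dτ` is an alternating sum of such
terms. Since `g` is `J`-invariant, `g(e₅, e₆) = 0` and `g(e₅, e₅) = g(e₆, e₆)`, and expanding in
coordinates gives `dτ = 4 (s² - t²) |e₅|² e¹²³⁴`, which vanishes identically exactly when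
`t² = s²`.
-/

/-- The Chevalley–Eilenberg differential of a `2`-form `F` on a real Lie algebra:
`(dF)(x,y,z) = −F([x,y],z) + F([x,z],y) − F([y,z],x)`. -/
def dTwoForm {L : Type} [LieRing L] (F : L → L → ℝ) (x y z : L) : ℝ :=
  -F ⁅x, y⁆ z + F ⁅x, z⁆ y - F ⁅y, z⁆ x

/-- The Chevalley–Eilenberg differential of a `3`-form `τ` on a real Lie algebra:
`(dτ)(x,y,z,w) = −τ([x,y],z,w) + τ([x,z],y,w) − τ([x,w],y,z) − τ([y,z],x,w)
 + τ([y,w],x,z) − τ([z,w],x,y)`. -/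
def dThreeForm {L : Type} [LieRing L] (τ : L → L → L → ℝ) (x y z w : L) : ℝ :=
  -τ ⁅x, y⁆ z w + τ ⁅x, z⁆ y w - τ ⁅x, w⁆ y z - τ ⁅y, z⁆ x w + τ ⁅y, w⁆ x z - τ ⁅z, w⁆ x y

/-- The Hermitian structure `(J, g)` on a real Lie algebra is strong Kähler with torsion:
the `3`-form `τ(x,y,z) = −(dF)(Jx,Jy,Jz)`, where `F(x,y) = g(Jx,y)` is the fundamental
`2`-form, is closed, i.e. `dτ = 0`. -/
def IsStrongKT {L : Type} [LieRing L] [LieAlgebra ℝ L] (J : L →ₗ[ℝ] L) (g : L →ₗ[ℝ] L →ₗ[ℝ] ℝ) : Prop :=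
  ∀ x y z w : L,
    dThreeForm (fun a b c => -(dTwoForm (fun p q => g (J p) q) (J a) (J b) (J c))) x y z w = 0

open Module

namespace Module.Basis

variable {ι R M : Type*} [CommRing R] [AddCommGroup M] [Module R M]

/-- `e.dualWedge k v = (e^{k 0} ∧ ⋯ ∧ e^{k (n-1)})(v 0, …, v (n-1))`, where `e^i` are the
coordinate functionals of `e`. -/
noncomputable def dualWedge (e : Basis ι R M) {n : ℕ} (k : Fin n → ι) (v : Fin n → M) : R :=
  ((e.toMatrix v).submatrix k id).det

theorem dualWedge_two (e : Basis ι R M) (i j : ι) (x y : M) :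
    e.dualWedge ![i, j] ![x, y] = e.repr x i * e.repr y j - e.repr y i * e.repr x j := by
  rw [dualWedge, Matrix.det_fin_two]
  simp [toMatrix_apply]

theorem dualWedge_comp_self [DecidableEq ι] (e : Basis ι R M) {n : ℕ} {k : Fin n → ι}
    (hk : Function.Injective k) : e.dualWedge k (e ∘ k) = 1 := by
  rw [dualWedge, ← Matrix.det_one (n := Fin n) (R := R)]
  congr 1
  ext a b
  simp [toMatrix_apply, Finsupp.single_apply, hk.eq_iff, Matrix.one_apply, eq_comm]

end Module.Basis

section Hermitian

variable {L : Type} [LieRing L] [LieAlgebra ℝ L] {J : L →ₗ[ℝ] L} {g : L →ₗ[ℝ] L →ₗ[ℝ] ℝ}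

theorem apply_smul_add_smul_of_compat (hsymm : ∀ x y : L, g x y = g y x)
    (hcompat : ∀ x y : L, g (J x) (J y) = g x y) {u v : L} (hu : J u = v) (hv : J v = -u)
    (a b c d : ℝ) : g (a • u + b • v) (c • u + d • v) = (a * c + b * d) * g u u := by
  have hvv : g v v = g u u := by rw [← hu, hcompat]
  have huv : g u v = 0 := by
    have := hcompat u v
    rw [hu, hv, map_neg, hsymm v u] at this
    linarith
  simp only [map_add, map_smul, LinearMap.add_apply, LinearMap.smul_apply, smul_eq_mul, hvv, huv,
    hsymm v u]
  ring

theorem neg_dTwoForm_fundamental_of_lie_eq_zero (hcompat : ∀ x y : L, g (J x) (J y) = g x y)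
    {a : L} (ha : ∀ z : L, ⁅J a, z⁆ = 0) (c d : L) :
    -dTwoForm (fun p q => g (J p) q) (J a) (J c) (J d) = g ⁅J c, J d⁆ a := by
  simp only [dTwoForm, ha, map_zero, LinearMap.zero_apply, hcompat]
  ring

theorem dThreeForm_fundamental_eq_of_central (hcompat : ∀ x y : L, g (J x) (J y) = g x y)
    (hcent : ∀ x y z : L, ⁅J ⁅x, y⁆, z⁆ = 0) (x y z w : L) :
    dThreeForm (fun a b c => -(dTwoForm (fun p q => g (J p) q) (J a) (J b) (J c))) x y z w =
      -g ⁅J z, J w⁆ ⁅x, y⁆ + g ⁅J y, J w⁆ ⁅x, z⁆ - g ⁅J y, J z⁆ ⁅x, w⁆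
        - g ⁅J x, J w⁆ ⁅y, z⁆ + g ⁅J x, J z⁆ ⁅y, w⁆ - g ⁅J x, J y⁆ ⁅z, w⁆ := by
  simp only [dThreeForm, neg_dTwoForm_fundamental_of_lie_eq_zero hcompat (hcent _ _)]

end Hermitian

structure IsNtsBasis {L : Type} [LieRing L] [LieAlgebra ℝ L] (t s : ℝ) (e : Basis (Fin 6) ℝ L) :
    Prop where
  lie_0_1 : ⁅e 0, e 1⁆ = (-t) • e 4
  lie_2_3 : ⁅e 2, e 3⁆ = (-(2*t)) • e 4
  lie_0_2 : ⁅e 0, e 2⁆ = (-s) • e 4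
  lie_1_3 : ⁅e 1, e 3⁆ = s • e 4
  lie_0_3 : ⁅e 0, e 3⁆ = (-s) • e 5
  lie_1_2 : ⁅e 1, e 2⁆ = (-s) • e 5
  lie_0_4 : ⁅e 0, e 4⁆ = 0
  lie_0_5 : ⁅e 0, e 5⁆ = 0
  lie_1_4 : ⁅e 1, e 4⁆ = 0
  lie_1_5 : ⁅e 1, e 5⁆ = 0
  lie_2_4 : ⁅e 2, e 4⁆ = 0
  lie_2_5 : ⁅e 2, e 5⁆ = 0
  lie_3_4 : ⁅e 3, e 4⁆ = 0
  lie_3_5 : ⁅e 3, e 5⁆ = 0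
  lie_4_5 : ⁅e 4, e 5⁆ = 0

structure IsNtsComplexStructure {L : Type} [AddCommGroup L] [Module ℝ L] (J : L →ₗ[ℝ] L)
    (e : Basis (Fin 6) ℝ L) : Prop where
  apply_0 : J (e 0) = e 1
  apply_1 : J (e 1) = -e 0
  apply_2 : J (e 2) = e 3
  apply_3 : J (e 3) = -e 2
  apply_4 : J (e 4) = e 5
  apply_5 : J (e 5) = -e 4

theorem IsNtsComplexStructure.repr_apply {L : Type} [AddCommGroup L] [Module ℝ L]
    {J : L →ₗ[ℝ] L} {e : Basis (Fin 6) ℝ L} (hJ : IsNtsComplexStructure J e) (x : L) (i : Fin 6) :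
    e.repr (J x) i =
      ![-e.repr x 1, e.repr x 0, -e.repr x 3, e.repr x 2, -e.repr x 5, e.repr x 4] i := by
  conv_lhs => rw [← e.sum_repr x]
  simp only [map_smul, Fin.sum_univ_six, hJ.apply_0, hJ.apply_1, hJ.apply_2, hJ.apply_3,
    hJ.apply_4, hJ.apply_5, map_neg, map_add, e.repr_self, smul_neg]
  fin_cases i <;> simp

namespace IsNtsBasis

variable {L : Type} [LieRing L] [LieAlgebra ℝ L] {t s : ℝ} {e : Basis (Fin 6) ℝ L}

theorem lie_eq (he : IsNtsBasis t s e) (x y : L) :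
    ⁅x, y⁆ = (-t * e.dualWedge ![0, 1] ![x, y] - 2 * t * e.dualWedge ![2, 3] ![x, y]
        - s * e.dualWedge ![0, 2] ![x, y] + s * e.dualWedge ![1, 3] ![x, y]) • e 4
      + (-s * e.dualWedge ![0, 3] ![x, y] - s * e.dualWedge ![1, 2] ![x, y]) • e 5 := by
  have skew : ∀ i j : Fin 6, j < i → ⁅e i, e j⁆ = -⁅e j, e i⁆ := fun i j _ =>
    (lie_skew (e i) (e j)).symm
  conv_lhs => rw [← e.sum_repr x, ← e.sum_repr y]
  simp only [add_lie, lie_add, smul_lie, lie_smul, Fin.sum_univ_six, lie_self, skew, Fin.reduceLT,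
    he.lie_0_1, he.lie_0_2, he.lie_0_3, he.lie_0_4, he.lie_0_5, he.lie_1_2, he.lie_1_3, he.lie_1_4,
    he.lie_1_5, he.lie_2_3, he.lie_2_4, he.lie_2_5, he.lie_3_4, he.lie_3_5, he.lie_4_5,
    e.dualWedge_two]
  module

theorem lie_eq_zero_of_repr_eq_zero (he : IsNtsBasis t s e) {u : L}
    (hu : ∀ i : Fin 6, i < 4 → e.repr u i = 0) (z : L) : ⁅u, z⁆ = 0 := by
  simp [he.lie_eq, e.dualWedge_two, hu]

theorem lie_J_lie_eq_zero (he : IsNtsBasis t s e) {J : L →ₗ[ℝ] L}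
    (hJ : IsNtsComplexStructure J e) (x y z : L) : ⁅J ⁅x, y⁆, z⁆ = 0 := by
  refine he.lie_eq_zero_of_repr_eq_zero (fun i hi => ?_) z
  fin_cases i <;> simp_all [hJ.repr_apply, he.lie_eq, e.dualWedge_two]

theorem dThreeForm_fundamental_eq (he : IsNtsBasis t s e) {J : L →ₗ[ℝ] L}
    (hJ : IsNtsComplexStructure J e) {g : L →ₗ[ℝ] L →ₗ[ℝ] ℝ} (hsymm : ∀ x y : L, g x y = g y x)
    (hcompat : ∀ x y : L, g (J x) (J y) = g x y) (x y z w : L) :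
    dThreeForm (fun a b c => -(dTwoForm (fun p q => g (J p) q) (J a) (J b) (J c))) x y z w =
      4 * (s ^ 2 - t ^ 2) * g (e 4) (e 4) * e.dualWedge ![0, 1, 2, 3] ![x, y, z, w] := by
  rw [dThreeForm_fundamental_eq_of_central hcompat (he.lie_J_lie_eq_zero hJ),
    Module.Basis.dualWedge, Matrix.det_succ_row_zero]
  simp only [Fin.sum_univ_succ, Fin.sum_univ_zero, Matrix.det_fin_three, Matrix.submatrix_apply,
    Basis.toMatrix_apply, id_eq, Fin.succAbove, Matrix.cons_val, Fin.reduceSucc, Fin.reduceCastSucc,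
    Fin.reduceLT, ↓reduceIte, Fin.coe_ofNat_eq_mod, he.lie_eq, e.dualWedge_two, hJ.repr_apply,
    apply_smul_add_smul_of_compat hsymm hcompat hJ.apply_4 hJ.apply_5]
  ring

end IsNtsBasis

theorem nts_strongKT_iff (t s : ℝ)
    (L : Type) [LieRing L] [LieAlgebra ℝ L] (e : Module.Basis (Fin 6) ℝ L)
    (h01 : ⁅e 0, e 1⁆ = (-t) • e 4) (h23 : ⁅e 2, e 3⁆ = (-(2*t)) • e 4)
    (h02 : ⁅e 0, e 2⁆ = (-s) • e 4) (h13 : ⁅e 1, e 3⁆ = s • e 4)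
    (h03 : ⁅e 0, e 3⁆ = (-s) • e 5) (h12 : ⁅e 1, e 2⁆ = (-s) • e 5)
    (h04 : ⁅e 0, e 4⁆ = 0) (h05 : ⁅e 0, e 5⁆ = 0)
    (h14 : ⁅e 1, e 4⁆ = 0) (h15 : ⁅e 1, e 5⁆ = 0)
    (h24 : ⁅e 2, e 4⁆ = 0) (h25 : ⁅e 2, e 5⁆ = 0)
    (h34 : ⁅e 3, e 4⁆ = 0) (h35 : ⁅e 3, e 5⁆ = 0)
    (h45 : ⁅e 4, e 5⁆ = 0)
    (J : L →ₗ[ℝ] L)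
    (hJ0 : J (e 0) = e 1) (hJ1 : J (e 1) = -e 0)
    (hJ2 : J (e 2) = e 3) (hJ3 : J (e 3) = -e 2)
    (hJ4 : J (e 4) = e 5) (hJ5 : J (e 5) = -e 4)
    (g : L →ₗ[ℝ] L →ₗ[ℝ] ℝ)
    (hsymm : ∀ x y : L, g x y = g y x)
    (hpos : ∀ x : L, x ≠ 0 → 0 < g x x)
    (hcompat : ∀ x y : L, g (J x) (J y) = g x y) :
    IsStrongKT J g ↔ t ^ 2 = s ^ 2 := by
  have he : IsNtsBasis t s e :=
    ⟨h01, h23, h02, h13, h03, h12, h04, h05, h14, h15, h24, h25, h34, h35, h45⟩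
  have hJ : IsNtsComplexStructure J e := ⟨hJ0, hJ1, hJ2, hJ3, hJ4, hJ5⟩
  have hvol : e.dualWedge ![0, 1, 2, 3] ![e 0, e 1, e 2, e 3] = 1 := by
    rw [show ![e 0, e 1, e 2, e 3] = e ∘ ![0, 1, 2, 3] by ext i; fin_cases i <;> rfl]
    exact e.dualWedge_comp_self (by decide)
  have hG : g (e 4) (e 4) ≠ 0 := (hpos _ (e.ne_zero 4)).ne'
  simp only [IsStrongKT, he.dThreeForm_fundamental_eq hJ hsymm hcompat]
  constructor
  · intro h
    simpa [hvol, hG, sub_eq_zero, eq_comm] using h (e 0) (e 1) (e 2) (e 3)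
  · intro h x y z w
    simp [h]
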